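/- Let g : [0,1] → ℝ be continuous and for m ∈ ℕ define E_m := ∫_0^1 g(s)·sin(2mπs)/(2m·sin(πs)) ds (with the integrand interpreted as g(s)·(1/m)Σ_{l=1}^m cos((2l−1)πs)). Then for every α < 1, m^α · E_m → 0 as m → ∞. -/

import Mathlib

/-!
Since `2 sin θ · ∑_{l=1}^m cos((2l-1)θ) = sin(2mθ)`, the kernel
`K_m(s) = (1/m) ∑_{l=1}^m cos((2l-1)πs)` satisfies `|K_m(s)| ≤ min(1, 1/(m·d(s)))` with
`d(s) = min(s, 1-s)`, by Jordan's inequality `sin(πs) ≥ 2 d(s)`. Interpolating with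
`min(1, x) ≤ x^β` gives `|K_m(s)| ≤ m^(-β) (s^(-β) + (1-s)^(-β))`, which is integrable for
`β < 1`. Hence `E_m = O(m^(-β))` for every `β < 1`, and any `β ∈ (α, 1)` gives `m^α E_m → 0`.
-/

open Real Finset MeasureTheory

theorem two_sin_mul_sum_cos_odd_mul (θ : ℝ) (m : ℕ) :
    2 * sin θ * ∑ l ∈ Icc 1 m, cos ((2 * (l : ℝ) - 1) * θ) = sin (2 * m * θ) := by
  induction m with
  | zero => simp
  | succ n ih =>
    rw [sum_Icc_succ_top (by omega), mul_add, ih]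
    have h := sin_sub_sin (2 * ((n : ℝ) + 1) * θ) (2 * n * θ)
    rw [show (2 * ((n : ℝ) + 1) * θ - 2 * n * θ) / 2 = θ by ring,
      show (2 * ((n : ℝ) + 1) * θ + 2 * n * θ) / 2 = (2 * ((n : ℝ) + 1) - 1) * θ by ring] at h
    push_cast
    linear_combination -h

theorem abs_sum_cos_odd_mul_le_inv {θ : ℝ} (hθ : 0 < sin θ) (m : ℕ) :
    |∑ l ∈ Icc 1 m, cos ((2 * (l : ℝ) - 1) * θ)| ≤ (2 * sin θ)⁻¹ := by
  have h2 : 0 < 2 * sin θ := by positivity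
  rw [← mul_le_mul_iff_of_pos_left h2, ← abs_of_pos h2, ← abs_mul, two_sin_mul_sum_cos_odd_mul,
    abs_of_pos h2, mul_inv_cancel₀ h2.ne']
  exact abs_sin_le_one _

theorem abs_sum_cos_odd_mul_le (θ : ℝ) (m : ℕ) :
    |∑ l ∈ Icc 1 m, cos ((2 * (l : ℝ) - 1) * θ)| ≤ m := by
  calc |∑ l ∈ Icc 1 m, cos ((2 * (l : ℝ) - 1) * θ)|
      ≤ ∑ l ∈ Icc 1 m, |cos ((2 * (l : ℝ) - 1) * θ)| := abs_sum_le_sum_abs _ _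
    _ ≤ ∑ _l ∈ Icc 1 m, (1 : ℝ) := sum_le_sum fun _ _ => abs_cos_le_one _
    _ = m := by simp

theorem two_mul_le_sin_pi_mul {s : ℝ} (h0 : 0 ≤ s) (h1 : s ≤ 1 / 2) : 2 * s ≤ sin (π * s) := by
  have := mul_le_sin (x := π * s) (by positivity) (by nlinarith [pi_pos])
  rwa [← mul_assoc, div_mul_cancel₀ _ pi_ne_zero] at this

theorem two_mul_min_le_sin_pi_mul {s : ℝ} (hs : s ∈ Set.Icc 0 1) :
    2 * min s (1 - s) ≤ sin (π * s) := by
  obtain ⟨h0, h1⟩ := hs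
  rcases le_total s (1 / 2) with h | h
  · exact (mul_le_mul_of_nonneg_left (min_le_left _ _) zero_le_two).trans
      (two_mul_le_sin_pi_mul h0 h)
  · calc 2 * min s (1 - s) ≤ 2 * (1 - s) := by gcongr; exact min_le_right _ _
      _ ≤ sin (π * (1 - s)) := two_mul_le_sin_pi_mul (by linarith) (by linarith)
      _ = sin (π * s) := by rw [mul_one_sub, sin_pi_sub]

theorem min_one_le_rpow {x β : ℝ} (hx : 0 ≤ x) (hβ0 : 0 ≤ β) (hβ1 : β ≤ 1) :
    min 1 x ≤ x ^ β := by
  rcases le_total x 1 with h | h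
  · calc min 1 x ≤ x ^ (1 : ℝ) := by rw [rpow_one]; exact min_le_right _ _
      _ ≤ x ^ β := rpow_le_rpow_of_exponent_ge' hx h hβ0 hβ1
  · exact (min_le_left _ _).trans (one_le_rpow h hβ0)

noncomputable def oddCosineAverage (m : ℕ) (s : ℝ) : ℝ :=
  (1 / (m : ℝ)) * ∑ l ∈ Icc 1 m, cos ((2 * (l : ℝ) - 1) * π * s)

theorem continuous_oddCosineAverage (m : ℕ) : Continuous (oddCosineAverage m) := by
  unfold oddCosineAverage; fun_prop

theorem abs_oddCosineAverage_le_min (m : ℕ) {s : ℝ} (hs : s ∈ Set.Ioo 0 1) :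
    |oddCosineAverage m s| ≤ min 1 ((m : ℝ) * min s (1 - s))⁻¹ := by
  have hd : 0 < min s (1 - s) := lt_min hs.1 (by linarith [hs.2])
  have hsin := two_mul_min_le_sin_pi_mul (Set.Ioo_subset_Icc_self hs)
  simp only [oddCosineAverage, mul_assoc, abs_mul, one_div, abs_inv, Nat.abs_cast]
  refine le_min ?_ ?_
  · calc (m : ℝ)⁻¹ * |∑ l ∈ Icc 1 m, cos ((2 * (l : ℝ) - 1) * (π * s))| ≤ (m : ℝ)⁻¹ * m := by
          gcongr; exact abs_sum_cos_odd_mul_le _ m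
      _ ≤ 1 := inv_mul_le_one_of_le₀ le_rfl (Nat.cast_nonneg m)
  · calc (m : ℝ)⁻¹ * |∑ l ∈ Icc 1 m, cos ((2 * (l : ℝ) - 1) * (π * s))|
          ≤ (m : ℝ)⁻¹ * (2 * sin (π * s))⁻¹ := by
          gcongr; exact abs_sum_cos_odd_mul_le_inv (by linarith) m
      _ ≤ (m : ℝ)⁻¹ * (min s (1 - s))⁻¹ := by
          gcongr; linarith
      _ = ((m : ℝ) * min s (1 - s))⁻¹ := (mul_inv _ _).symm

-- Only on the open interval: `0 ^ (-β) = 0` in Lean, so the bound fails at the endpoints.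
theorem abs_oddCosineAverage_le_rpow (m : ℕ) {β : ℝ} (hβ0 : 0 ≤ β) (hβ1 : β ≤ 1) {s : ℝ}
    (hs : s ∈ Set.Ioo 0 1) :
    |oddCosineAverage m s| ≤ (m : ℝ) ^ (-β) * (s ^ (-β) + (1 - s) ^ (-β)) := by
  have hd : 0 ≤ min s (1 - s) := le_min hs.1.le (by linarith [hs.2])
  calc |oddCosineAverage m s| ≤ min 1 ((m : ℝ) * min s (1 - s))⁻¹ :=
        abs_oddCosineAverage_le_min m hs
    _ ≤ (((m : ℝ) * min s (1 - s))⁻¹) ^ β := min_one_le_rpow (by positivity) hβ0 hβ1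
    _ = (m : ℝ) ^ (-β) * (min s (1 - s)) ^ (-β) := by
        rw [inv_rpow (by positivity), ← rpow_neg (by positivity), mul_rpow (by positivity) hd]
    _ ≤ (m : ℝ) ^ (-β) * (s ^ (-β) + (1 - s) ^ (-β)) := by
        gcongr
        rcases min_choice s (1 - s) with h | h <;> rw [h]
        · exact le_add_of_nonneg_right (rpow_nonneg (by linarith [hs.2]) _)
        · exact le_add_of_nonneg_left (rpow_nonneg hs.1.le _)

theorem intervalIntegrable_one_sub_rpow {r : ℝ} (hr : -1 < r) :
    IntervalIntegrable (fun s : ℝ => (1 - s) ^ r) volume 0 1 := by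
  simpa using (intervalIntegral.intervalIntegrable_rpow' (a := 1) (b := 0) hr).comp_sub_left 1

theorem integral_rpow_add_one_sub_rpow {r : ℝ} (hr : -1 < r) :
    ∫ s in (0 : ℝ)..1, (s ^ r + (1 - s) ^ r) = 2 / (r + 1) := by
  rw [intervalIntegral.integral_add (intervalIntegral.intervalIntegrable_rpow' hr)
      (intervalIntegrable_one_sub_rpow hr),
    intervalIntegral.integral_comp_sub_left (fun s => s ^ r), sub_self, sub_zero,
    integral_rpow (Or.inl hr), zero_rpow (by linarith), one_rpow]
  ring

theorem abs_integral_mul_oddCosineAverage_le {g : ℝ → ℝ} {C : ℝ}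
    (hg : ContinuousOn g (Set.Icc 0 1))
    (hC : ∀ s ∈ Set.Icc (0 : ℝ) 1, |g s| ≤ C) (m : ℕ) {β : ℝ} (hβ0 : 0 ≤ β) (hβ1 : β < 1) :
    |∫ s in (0 : ℝ)..1, g s * oddCosineAverage m s| ≤ C * (2 / (1 - β)) * (m : ℝ) ^ (-β) := by
  have hC0 : 0 ≤ C := (abs_nonneg _).trans (hC 0 (by simp))
  have hr : -1 < -β := by linarith
  calc |∫ s in (0 : ℝ)..1, g s * oddCosineAverage m s|
      ≤ ∫ s in (0 : ℝ)..1, |g s * oddCosineAverage m s| :=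
        intervalIntegral.abs_integral_le_integral_abs zero_le_one
    _ ≤ ∫ s in (0 : ℝ)..1, C * ((m : ℝ) ^ (-β) * (s ^ (-β) + (1 - s) ^ (-β))) := by
        refine intervalIntegral.integral_mono_on_of_le_Ioo zero_le_one ?_ ?_ fun s hs => ?_
        · exact ((hg.mul (continuous_oddCosineAverage m).continuousOn).abs
            ).intervalIntegrable_of_Icc zero_le_one
        · exact (((intervalIntegral.intervalIntegrable_rpow' hr).add
            (intervalIntegrable_one_sub_rpow hr)).const_mul _).const_mul _
        · rw [abs_mul]
          exact mul_le_mul (hC s (Set.Ioo_subset_Icc_self hs))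
            (abs_oddCosineAverage_le_rpow m hβ0 hβ1.le hs) (abs_nonneg _) hC0
    _ = C * (2 / (1 - β)) * (m : ℝ) ^ (-β) := by
        rw [intervalIntegral.integral_const_mul, intervalIntegral.integral_const_mul,
          integral_rpow_add_one_sub_rpow hr, neg_add_eq_sub]
        ring

theorem stmt4 (g : ℝ → ℝ) (hg : ContinuousOn g (Set.Icc 0 1)) (α : ℝ) (hα : α < 1) :
    Filter.Tendsto
      (fun m : ℕ => (m : ℝ) ^ α *
        ∫ s in (0:ℝ)..1,
          g s * ((1 / (m : ℝ)) * ∑ l ∈ Finset.Icc 1 m, Real.cos ((2 * (l : ℝ) - 1) * π * s)))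
      Filter.atTop (nhds 0) := by
  obtain ⟨C, hC⟩ := isCompact_Icc.exists_bound_of_continuousOn hg
  obtain ⟨β, hβα, hβ1⟩ := exists_between (max_lt hα one_pos)
  have hdecay : Filter.Tendsto (fun m : ℕ => C * (2 / (1 - β)) * (m : ℝ) ^ (-(β - α)))
      Filter.atTop (nhds 0) := by
    simpa using ((tendsto_rpow_neg_atTop (sub_pos.2 ((le_max_left α 0).trans_lt hβα))).comp
      tendsto_natCast_atTop_atTop).const_mul (C * (2 / (1 - β)))
  refine squeeze_zero_norm' ?_ hdecay
  filter_upwards [Filter.eventually_gt_atTop 0] with m hm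
  have hm' : (0 : ℝ) < m := Nat.cast_pos.2 hm
  rw [norm_mul, norm_of_nonneg (rpow_nonneg hm'.le α), norm_eq_abs]
  calc (m : ℝ) ^ α * |∫ s in (0 : ℝ)..1, g s * oddCosineAverage m s|
      ≤ (m : ℝ) ^ α * (C * (2 / (1 - β)) * (m : ℝ) ^ (-β)) := by
        gcongr
        exact abs_integral_mul_oddCosineAverage_le hg hC m ((le_max_right α 0).trans hβα.le) hβ1
    _ = C * (2 / (1 - β)) * (m : ℝ) ^ (-(β - α)) := by
        rw [neg_sub, rpow_sub hm', rpow_neg hm'.le]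
        ring
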